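/- The transformation S permutes the equivalence classes of the tetrahedra T11,...,T17 with respect to the group generated by B11, B12, B13 as follows: there exist integers i, j, k (depending on the pair) such that the image of the vertex set of T11 under S equals the image of the vertex set of T14 under B11^i·B12^j·B13^k; similarly the image of T12 under S is a B11^i·B12^j·B13^k-translate of T15, the image of T13 under S is such a translate of T16, and the image of T17 under S is such a translate of T17 itself. -/

import Mathlib

open Matrix Polynomial

def A1 : Matrix (Fin 4) (Fin 4) ℚ :=
  !![0, 1, 0, 0; 0, 0, 1, 0; 0, 0, 0, 1; 1, -3, 0, 4]

lemma hdetA1 : A1.det ≠ 0 := by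
  simp [A1, Matrix.det_succ_row_zero, Fin.sum_univ_succ]
  simp [Fin.succAbove, Fin.lt_def]

lemma hdetA1sub : (A1 - 1).det ≠ 0 := by
  have h : A1 - 1 = !![-1, 1, 0, 0; 0, -1, 1, 0; 0, 0, -1, 1; 1, -3, 0, 3] := by
    ext i j
    fin_cases i <;> fin_cases j <;>
      simp [A1, Matrix.one_apply, Matrix.vecHead, Matrix.vecTail] <;> norm_num
  rw [h]
  simp [Matrix.det_succ_row_zero, Fin.sum_univ_succ]
  norm_num [Fin.succAbove, Fin.lt_def, Matrix.cons_val_two, Matrix.vecHead, Matrix.vecTail]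

lemma hdetA1add : (A1 + 1).det ≠ 0 := by
  have h : A1 + 1 = !![1, 1, 0, 0; 0, 1, 1, 0; 0, 0, 1, 1; 1, -3, 0, 5] := by
    ext i j
    fin_cases i <;> fin_cases j <;>
      simp [A1, Matrix.one_apply, Matrix.vecHead, Matrix.vecTail] <;> norm_num
  rw [h]
  simp [Matrix.det_succ_row_zero, Fin.sum_univ_succ]
  norm_num [Fin.succAbove, Fin.lt_def, Matrix.cons_val_two, Matrix.vecHead, Matrix.vecTail]

noncomputable def gA1 : GL (Fin 4) ℚ := Matrix.GeneralLinearGroup.mkOfDetNeZero A1 hdetA1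
noncomputable def uA1 : GL (Fin 4) ℚ := Matrix.GeneralLinearGroup.mkOfDetNeZero (A1 - 1) hdetA1sub
noncomputable def vA1 : GL (Fin 4) ℚ := Matrix.GeneralLinearGroup.mkOfDetNeZero (A1 + 1) hdetA1add

noncomputable def B11 : GL (Fin 4) ℚ := (gA1 ^ 2)⁻¹
noncomputable def B12 : GL (Fin 4) ℚ := uA1 ^ 2 * (gA1 ^ 2)⁻¹
noncomputable def B13 : GL (Fin 4) ℚ := uA1 ^ 2 * vA1 * (gA1 ^ 2)⁻¹

def V10 : Fin 4 → ℚ := ![-3, -2, -1, 1]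

/-- `V i j k` is the point `B11^i * B12^j * B13^k` applied to `V10`;
the paper's vertex `V_{1,4i+2j+k}`. -/
noncomputable def V (i j k : ℕ) : Fin 4 → ℚ :=
  ((B11 ^ i * B12 ^ j * B13 ^ k : GL (Fin 4) ℚ) : Matrix (Fin 4) (Fin 4) ℚ).mulVec V10

def S : Matrix (Fin 4) (Fin 4) ℚ :=
  !![4, -16, 17, -3; 3, -11, 11, -2; 3, -8, 6, -1; 6, -8, -2, 1]

/-! With `g = B11⁻¹ * B13⁻¹`, the matrix `g⁻¹ * S = B13 * B11 * S` sends the vertices of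
`T11`, `T12`, `T13` bijectively onto those of `T14`, `T15`, `T16`, and `S` itself permutes the
vertices of `T17`. So `S T = g T'` in the first three cases and `S T17 = T17`; all of this is
checked by evaluating explicit integer matrices on the eight vertices. -/

theorem Matrix.image_mulVec_eq_image_of_inv_mul {n R : Type*} [Fintype n] [DecidableEq n]
    [Semiring R] (M : Matrix n n R) (g : (Matrix n n R)ˣ) {T T' : Set (n → R)}
    (h : (fun x => ((↑g⁻¹ : Matrix n n R) * M) *ᵥ x) '' T = T') :
    (fun x => M *ᵥ x) '' T = (fun x => (g : Matrix n n R) *ᵥ x) '' T' := by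
  rw [← h, Set.image_image]
  simp only [mulVec_mulVec, ← mul_assoc, Units.mul_inv, one_mul]

lemma coe_gA1 : (gA1 : Matrix (Fin 4) (Fin 4) ℚ) = A1 := rfl

lemma coe_uA1 : (uA1 : Matrix (Fin 4) (Fin 4) ℚ) = A1 - 1 := rfl

lemma coe_vA1 : (vA1 : Matrix (Fin 4) (Fin 4) ℚ) = A1 + 1 := rfl

lemma coe_B11 :
    (B11 : Matrix (Fin 4) (Fin 4) ℚ) = !![9, -4, -11, 3; 3, 0, -4, 1; 1, 0, 0, 0; 0, 1, 0, 0] := by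
  rw [B11, coe_units_inv, Units.val_pow_eq_pow_val, coe_gA1]
  refine inv_eq_left_inv ?_
  simp [A1, sq, ← Matrix.ext_iff, Fin.forall_fin_succ, one_apply]
  norm_num

lemma coe_B12 :
    (B12 : Matrix (Fin 4) (Fin 4) ℚ) = !![4, -4, -3, 1; 1, 1, -4, 1; 1, -2, 1, 0; 0, 1, -2, 1] := by
  rw [B12, Units.val_mul, ← B11, coe_B11, Units.val_pow_eq_pow_val, coe_uA1]
  simp [A1, sq, ← Matrix.ext_iff, Fin.forall_fin_succ, mul_apply, Fin.sum_univ_four,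
    one_apply]
  norm_num

lemma coe_B13 :
    (B13 : Matrix (Fin 4) (Fin 4) ℚ) = !![5, -3, -7, 2; 2, -1, -3, 1; 1, -1, -1, 1; 1, -2, -1, 3] := by
  rw [B13, Units.val_mul, Units.val_mul, ← B11, coe_B11, Units.val_pow_eq_pow_val, coe_uA1, coe_vA1]
  simp [A1, sq, ← Matrix.ext_iff, Fin.forall_fin_succ, mul_apply, Fin.sum_univ_four,
    one_apply]
  norm_num

lemma V_eq_mulVec (a b c : ℕ) :
    V a b c = (B11 : Matrix (Fin 4) (Fin 4) ℚ) ^ a *ᵥ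
      ((B12 : Matrix (Fin 4) (Fin 4) ℚ) ^ b *ᵥ ((B13 : Matrix (Fin 4) (Fin 4) ℚ) ^ c *ᵥ V10)) := by
  simp only [V, Units.val_mul, Units.val_pow_eq_pow_val, mulVec_mulVec, mul_assoc]

lemma V_000 : V 0 0 0 = ![-3, -2, -1, 1] := by
  simp only [V_eq_mulVec, pow_zero, one_mulVec, V10]

lemma V_001 : V 0 0 1 = ![0, 0, 1, 5] := by
  norm_num only [V_eq_mulVec, V10, coe_B13, pow_zero, pow_one, one_mulVec,
    cons_mulVec, cons_dotProduct_cons, dotProduct_of_isEmpty, empty_mulVec]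

lemma V_010 : V 0 1 0 = ![0, 0, 0, 1] := by
  norm_num only [V_eq_mulVec, V10, coe_B12, pow_zero, pow_one, one_mulVec,
    cons_mulVec, cons_dotProduct_cons, dotProduct_of_isEmpty, empty_mulVec]

lemma V_011 : V 0 1 1 = ![2, 1, 1, 3] := by
  norm_num only [V_eq_mulVec, V10, coe_B12, coe_B13, pow_zero, pow_one, one_mulVec,
    cons_mulVec, cons_dotProduct_cons, dotProduct_of_isEmpty, empty_mulVec]

lemma V_100 : V 1 0 0 = ![-5, -4, -3, -2] := by
  norm_num only [V_eq_mulVec, V10, coe_B11, pow_zero, pow_one, one_mulVec,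
    cons_mulVec, cons_dotProduct_cons, dotProduct_of_isEmpty, empty_mulVec]

lemma V_101 : V 1 0 1 = ![4, 1, 0, 0] := by
  norm_num only [V_eq_mulVec, V10, coe_B11, coe_B13, pow_zero, pow_one, one_mulVec,
    cons_mulVec, cons_dotProduct_cons, dotProduct_of_isEmpty, empty_mulVec]

lemma V_110 : V 1 1 0 = ![3, 1, 0, 0] := by
  norm_num only [V_eq_mulVec, V10, coe_B11, coe_B12, pow_zero, pow_one, one_mulVec,
    cons_mulVec, cons_dotProduct_cons, dotProduct_of_isEmpty, empty_mulVec]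

lemma V_111 : V 1 1 1 = ![12, 5, 2, 1] := by
  norm_num only [V_eq_mulVec, V10, coe_B11, coe_B12, coe_B13, pow_one,
    cons_mulVec, cons_dotProduct_cons, dotProduct_of_isEmpty, empty_mulVec]

noncomputable def S' : Matrix (Fin 4) (Fin 4) ℚ :=
  ((B13 * B11 : GL (Fin 4) ℚ) : Matrix (Fin 4) (Fin 4) ℚ) * S

lemma S'_eq : S' = !![5, -18, 13, 4; 3, -11, 9, 1; 2, -7, 6, 0; 2, -5, 3, 0] := by
  rw [S', Units.val_mul, coe_B13, coe_B11, S]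
  simp
  norm_num

lemma S'_mulVec_V_000 : S' *ᵥ V 0 0 0 = V 1 1 1 := by
  rw [S'_eq, V_000, V_111]
  norm_num only [cons_mulVec, cons_dotProduct_cons, dotProduct_of_isEmpty, empty_mulVec]

lemma S'_mulVec_V_010 : S' *ᵥ V 0 1 0 = V 1 0 1 := by
  rw [S'_eq, V_010, V_101]
  norm_num only [cons_mulVec, cons_dotProduct_cons, dotProduct_of_isEmpty, empty_mulVec]

lemma S'_mulVec_V_100 : S' *ᵥ V 1 0 0 = V 0 1 0 := by
  rw [S'_eq, V_100, V_010]
  norm_num only [cons_mulVec, cons_dotProduct_cons, dotProduct_of_isEmpty, empty_mulVec]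

lemma S'_mulVec_V_101 : S' *ᵥ V 1 0 1 = V 0 1 1 := by
  rw [S'_eq, V_101, V_011]
  norm_num only [cons_mulVec, cons_dotProduct_cons, dotProduct_of_isEmpty, empty_mulVec]

lemma S'_mulVec_V_110 : S' *ᵥ V 1 1 0 = V 0 0 0 := by
  rw [S'_eq, V_110, V_000]
  norm_num only [cons_mulVec, cons_dotProduct_cons, dotProduct_of_isEmpty, empty_mulVec]

lemma S'_mulVec_V_111 : S' *ᵥ V 1 1 1 = V 0 0 1 := by
  rw [S'_eq, V_111, V_001]
  norm_num only [cons_mulVec, cons_dotProduct_cons, dotProduct_of_isEmpty, empty_mulVec]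

lemma S_mulVec_V_000 : S *ᵥ V 0 0 0 = V 0 1 0 := by
  rw [S, V_000, V_010]
  norm_num only [cons_mulVec, cons_dotProduct_cons, dotProduct_of_isEmpty, empty_mulVec]

lemma S_mulVec_V_001 : S *ᵥ V 0 0 1 = V 0 1 1 := by
  rw [S, V_001, V_011]
  norm_num only [cons_mulVec, cons_dotProduct_cons, dotProduct_of_isEmpty, empty_mulVec]

lemma S_mulVec_V_010 : S *ᵥ V 0 1 0 = V 0 0 0 := by
  rw [S, V_010, V_000]
  norm_num only [cons_mulVec, cons_dotProduct_cons, dotProduct_of_isEmpty, empty_mulVec]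

lemma S_mulVec_V_011 : S *ᵥ V 0 1 1 = V 0 0 1 := by
  rw [S, V_011, V_001]
  norm_num only [cons_mulVec, cons_dotProduct_cons, dotProduct_of_isEmpty, empty_mulVec]

def T11 : Set (Fin 4 → ℚ) := {V 0 0 0, V 0 1 0, V 1 0 0, V 1 0 1}
def T12 : Set (Fin 4 → ℚ) := {V 0 1 0, V 1 0 0, V 1 0 1, V 1 1 0}
def T13 : Set (Fin 4 → ℚ) := {V 0 1 0, V 1 0 1, V 1 1 0, V 1 1 1}
def T14 : Set (Fin 4 → ℚ) := {V 0 1 0, V 0 1 1, V 1 0 1, V 1 1 1}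
def T15 : Set (Fin 4 → ℚ) := {V 0 0 0, V 0 1 0, V 0 1 1, V 1 0 1}
def T16 : Set (Fin 4 → ℚ) := {V 0 0 0, V 0 0 1, V 0 1 1, V 1 0 1}
def T17 : Set (Fin 4 → ℚ) := {V 0 0 0, V 0 0 1, V 0 1 0, V 0 1 1}

lemma image_S'_T11 : (fun x => S' *ᵥ x) '' T11 = T14 := by
  simp only [T11, T14, Set.image_insert_eq, Set.image_singleton, S'_mulVec_V_000, S'_mulVec_V_010,
    S'_mulVec_V_100, S'_mulVec_V_101]
  ext; simp only [Set.mem_insert_iff, Set.mem_singleton_iff, or_comm, or_left_comm]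

lemma image_S'_T12 : (fun x => S' *ᵥ x) '' T12 = T15 := by
  simp only [T12, T15, Set.image_insert_eq, Set.image_singleton, S'_mulVec_V_010, S'_mulVec_V_100,
    S'_mulVec_V_101, S'_mulVec_V_110]
  ext; simp only [Set.mem_insert_iff, Set.mem_singleton_iff, or_comm, or_left_comm]

lemma image_S'_T13 : (fun x => S' *ᵥ x) '' T13 = T16 := by
  simp only [T13, T16, Set.image_insert_eq, Set.image_singleton, S'_mulVec_V_010, S'_mulVec_V_101,
    S'_mulVec_V_110, S'_mulVec_V_111]
  ext; simp only [Set.mem_insert_iff, Set.mem_singleton_iff, or_comm, or_left_comm]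

lemma image_S_T17 : (fun x => S *ᵥ x) '' T17 = T17 := by
  simp only [T17, Set.image_insert_eq, Set.image_singleton, S_mulVec_V_000, S_mulVec_V_001,
    S_mulVec_V_010, S_mulVec_V_011]
  ext; simp only [Set.mem_insert_iff, Set.mem_singleton_iff, or_comm, or_left_comm]

theorem statement8 :
    (∃ i j k : ℤ,
      (fun x => S.mulVec x) '' ({V 0 0 0, V 0 1 0, V 1 0 0, V 1 0 1} : Set (Fin 4 → ℚ)) =
      (fun x => ((B11 ^ i * B12 ^ j * B13 ^ k : GL (Fin 4) ℚ) : Matrix (Fin 4) (Fin 4) ℚ).mulVec x) ''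
        ({V 0 1 0, V 0 1 1, V 1 0 1, V 1 1 1} : Set (Fin 4 → ℚ))) ∧
    (∃ i j k : ℤ,
      (fun x => S.mulVec x) '' ({V 0 1 0, V 1 0 0, V 1 0 1, V 1 1 0} : Set (Fin 4 → ℚ)) =
      (fun x => ((B11 ^ i * B12 ^ j * B13 ^ k : GL (Fin 4) ℚ) : Matrix (Fin 4) (Fin 4) ℚ).mulVec x) ''
        ({V 0 0 0, V 0 1 0, V 0 1 1, V 1 0 1} : Set (Fin 4 → ℚ))) ∧
    (∃ i j k : ℤ,
      (fun x => S.mulVec x) '' ({V 0 1 0, V 1 0 1, V 1 1 0, V 1 1 1} : Set (Fin 4 → ℚ)) =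
      (fun x => ((B11 ^ i * B12 ^ j * B13 ^ k : GL (Fin 4) ℚ) : Matrix (Fin 4) (Fin 4) ℚ).mulVec x) ''
        ({V 0 0 0, V 0 0 1, V 0 1 1, V 1 0 1} : Set (Fin 4 → ℚ))) ∧
    (∃ i j k : ℤ,
      (fun x => S.mulVec x) '' ({V 0 0 0, V 0 0 1, V 0 1 0, V 0 1 1} : Set (Fin 4 → ℚ)) =
      (fun x => ((B11 ^ i * B12 ^ j * B13 ^ k : GL (Fin 4) ℚ) : Matrix (Fin 4) (Fin 4) ℚ).mulVec x) ''
        ({V 0 0 0, V 0 0 1, V 0 1 0, V 0 1 1} : Set (Fin 4 → ℚ))) := by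
  have hg : (B11 ^ (-1 : ℤ) * B12 ^ (0 : ℤ) * B13 ^ (-1 : ℤ))⁻¹ = B13 * B11 := by group
  refine ⟨⟨-1, 0, -1, ?_⟩, ⟨-1, 0, -1, ?_⟩, ⟨-1, 0, -1, ?_⟩, ⟨0, 0, 0, ?_⟩⟩ <;>
    apply Matrix.image_mulVec_eq_image_of_inv_mul
  · rw [hg, ← S']; exact image_S'_T11
  · rw [hg, ← S']; exact image_S'_T12
  · rw [hg, ← S']; exact image_S'_T13
  · simp only [zpow_zero, mul_one, inv_one, Units.val_one, one_mul]
    exact image_S_T17
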